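/- arXiv:2006.04626 — 3 statements merged into one kernel-verified Lean document; each statement's English description precedes it below -/
import Mathlib

section
/- Let (S, f) be a Frobenius GNS in ℕ_0^d. Then S is almost symmetric if and only if L(S) ⊆ PF(S), where L(S) = {h ∈ H(S) : there exists h' ∈ H(S) with h + h' = f}. -/
open scoped BigOperators

/-- A generalized numerical semigroup: a submonoid of `ℕ^d` with finite complement. -/
def IsGNS {d : ℕ} (S : Set (Fin d → ℕ)) : Prop :=
  (0 : Fin d → ℕ) ∈ S ∧ (∀ x y : Fin d → ℕ, x ∈ S → y ∈ S → x + y ∈ S) ∧ Sᶜ.Finite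

/-- The genus: number of gaps. -/
noncomputable def genus {d : ℕ} (S : Set (Fin d → ℕ)) : ℕ := Sᶜ.ncard

/-- Pseudo-Frobenius elements. -/
def PF {d : ℕ} (S : Set (Fin d → ℕ)) : Set (Fin d → ℕ) :=
  {h | h ∉ S ∧ ∀ s ∈ S, s ≠ 0 → h + s ∈ S}

/-- The type: number of pseudo-Frobenius elements. -/
noncomputable def typ {d : ℕ} (S : Set (Fin d → ℕ)) : ℕ := (PF S).ncard

/-- Maximal elements of a set with respect to a relation. -/
def Maximals {α : Type*} (le : α → α → Prop) (X : Set α) : Set α :=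
  {x ∈ X | ∀ y ∈ X, le x y → x = y}

/-- `f` is the unique maximal element of the set of gaps w.r.t. the componentwise order. -/
def IsFrobenius {d : ℕ} (S : Set (Fin d → ℕ)) (f : Fin d → ℕ) : Prop :=
  Maximals (· ≤ ·) Sᶜ = {f}

/-- Almost symmetric: `2 g(S) + 1 - t(S) = ∏ (h i + 1)` for some gap `h`. -/
def AlmostSymmetric {d : ℕ} (S : Set (Fin d → ℕ)) : Prop :=
  ∃ h ∉ S, 2 * genus S + 1 = typ S + ∏ i, (h i + 1)

/-- Special gaps. -/
def SG {d : ℕ} (S : Set (Fin d → ℕ)) : Set (Fin d → ℕ) :=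
  {h ∈ PF S | h + h ∈ S}

/-- The partial order `≤_S` : `y ≤_S x` iff `x - y ∈ S`. -/
def leS {d : ℕ} (S : Set (Fin d → ℕ)) (x y : Fin d → ℕ) : Prop :=
  ∃ s ∈ S, x + s = y

/-- The Apéry set of `S` with respect to `n`. -/
def Ap {d : ℕ} (S : Set (Fin d → ℕ)) (n : Fin d → ℕ) : Set (Fin d → ℕ) :=
  {s ∈ S | ¬ ∃ u ∈ S, u + n = s}

/-- The reduced Apéry set of `S` with respect to `n`. -/
def Cred {d : ℕ} (S : Set (Fin d → ℕ)) (n : Fin d → ℕ) : Set (Fin d → ℕ) :=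
  {s ∈ Ap S n | ∃ h, h ∉ S ∧ s ≤ h + n}

/-- A monomial order on `ℕ^d` given by its strict-order relation. -/
def IsMonomialOrder (d : ℕ) (lt : (Fin d → ℕ) → (Fin d → ℕ) → Prop) : Prop :=
  (∀ a, ¬ lt a a) ∧ (∀ a b c, lt a b → lt b c → lt a c) ∧
  (∀ a b, a ≠ b → lt a b ∨ lt b a) ∧
  (∀ u a b, lt a b → lt (a + u) (b + u)) ∧
  (∀ a, a ≠ (0 : Fin d → ℕ) → lt 0 a)

/-- Minimal generator of a GNS. -/
def IsMinGen {d : ℕ} (S : Set (Fin d → ℕ)) (x : Fin d → ℕ) : Prop :=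
  x ∈ S ∧ x ≠ 0 ∧ ∀ y ∈ S, ∀ z ∈ S, y ≠ 0 → z ≠ 0 → y + z ≠ x

/-- Irreducible GNS: not an intersection of two GNSs properly containing it. -/
def GNSIrreducible {d : ℕ} (S : Set (Fin d → ℕ)) : Prop :=
  ¬ ∃ S₁ S₂ : Set (Fin d → ℕ), IsGNS S₁ ∧ IsGNS S₂ ∧ S ⊂ S₁ ∧ S ⊂ S₂ ∧ S = S₁ ∩ S₂

/-- Pseudo-symmetric: `PF S = {f, f/2}`. -/
def PseudoSymmetric {d : ℕ} (S : Set (Fin d → ℕ)) : Prop :=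
  ∃ f q : Fin d → ℕ, f ≠ q ∧ q + q = f ∧ PF S = {f, q}

/-!
Every gap lies below `f`, so `x ↦ f - x` maps the elements of `S` in the box `[0, f]`
bijectively onto the gaps outside `L(S)`; counting the box gives `|[0, f]| + |L(S)| = 2 g(S)`.
Moreover `f ∈ PF(S)`, `f ∉ L(S)` and `PF(S) \ {f} ⊆ L(S)`, hence
`2 g(S) + 1 - t(S) = |f + 1|_× + |L(S)| - |PF(S) \ {f}|`. Since `|h + 1|_× ≤ |f + 1|_×` for every
gap `h`, almost symmetry holds exactly when `L(S) = PF(S) \ {f}`, i.e. when `L(S) ⊆ PF(S)`.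
-/

theorem ncard_Iic_pi {d : ℕ} (f : Fin d → ℕ) : (Set.Iic f).ncard = ∏ i, (f i + 1) := by
  rw [← Finset.coe_Iic, Set.ncard_coe_finset, Pi.card_Iic]
  simp

theorem le_of_maximals_eq_singleton {α : Type*} [PartialOrder α] {X : Set α} {f a : α}
    (hX : X.Finite) (h : Maximals (· ≤ ·) X = {f}) (ha : a ∈ X) : a ≤ f := by
  obtain ⟨b, hab, hb⟩ := hX.exists_le_maximal ha
  have hbmax : b ∈ Maximals (· ≤ ·) X := ⟨hb.prop, fun _ hy hby => hb.eq_of_le hy hby⟩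
  rw [h] at hbmax
  exact hbmax ▸ hab

/-- The set `L(S)` of the paper. -/
def pairedGaps {d : ℕ} (S : Set (Fin d → ℕ)) (f : Fin d → ℕ) : Set (Fin d → ℕ) :=
  {h | h ∉ S ∧ ∃ h', h' ∉ S ∧ h + h' = f}

section Frobenius

variable {d : ℕ} {S : Set (Fin d → ℕ)} {f : Fin d → ℕ}

theorem IsFrobenius.notMem (hf : IsFrobenius S f) : f ∉ S := by
  have hmax : f ∈ Maximals (· ≤ ·) Sᶜ := hf ▸ rfl
  exact hmax.1

theorem IsFrobenius.le_of_notMem (hf : IsFrobenius S f) (hfin : Sᶜ.Finite) {a : Fin d → ℕ}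
    (ha : a ∉ S) : a ≤ f :=
  le_of_maximals_eq_singleton hfin hf ha

theorem IsFrobenius.mem_PF (hf : IsFrobenius S f) (hfin : Sᶜ.Finite) : f ∈ PF S := by
  refine ⟨hf.notMem, fun s _ hs0 => by_contra fun hfs => hs0 ?_⟩
  exact nonpos_iff_eq_zero.1 ((add_le_iff_nonpos_right _).1 (hf.le_of_notMem hfin hfs))

theorem self_notMem_pairedGaps (h0 : 0 ∈ S) : f ∉ pairedGaps S f := by
  rintro ⟨-, h', hh', hsum⟩
  rw [add_eq_left.1 hsum] at hh'
  exact hh' h0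

theorem IsFrobenius.PF_diff_singleton_subset_pairedGaps (hf : IsFrobenius S f)
    (hfin : Sᶜ.Finite) : PF S \ {f} ⊆ pairedGaps S f := by
  rintro h ⟨⟨hhS, hPF⟩, hhf⟩
  have hle := hf.le_of_notMem hfin hhS
  refine ⟨hhS, f - h, fun hc => hf.notMem ?_, add_tsub_cancel_of_le hle⟩
  have hne : f - h ≠ 0 := fun h0 => hhf (hle.antisymm (tsub_eq_zero_iff_le.1 h0))
  simpa [add_tsub_cancel_of_le hle] using hPF _ hc hne

theorem IsFrobenius.image_sub_eq_diff_pairedGaps (hf : IsFrobenius S f) (hfin : Sᶜ.Finite)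
    (hadd : ∀ x y, x ∈ S → y ∈ S → x + y ∈ S) :
    (f - ·) '' (S ∩ Set.Iic f) = Sᶜ \ pairedGaps S f := by
  ext y
  constructor
  · rintro ⟨x, ⟨hxS, hxf⟩, rfl⟩
    have hsum : x + (f - x) = f := add_tsub_cancel_of_le hxf
    refine ⟨fun hc => hf.notMem (hsum ▸ hadd _ _ hxS hc), ?_⟩
    rintro ⟨-, h', hh', hsum' : f - x + h' = f⟩
    have hh'x : h' = x := add_right_cancel (b := f - x) (by rw [add_comm, hsum', hsum])
    exact hh' (hh'x ▸ hxS)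
  · rintro ⟨hyS, hyL⟩
    have hyf := hf.le_of_notMem hfin hyS
    refine ⟨f - y, ⟨by_contra fun hc => hyL ⟨hyS, f - y, hc, add_tsub_cancel_of_le hyf⟩,
      Set.mem_Iic.2 tsub_le_self⟩, tsub_tsub_cancel_of_le hyf⟩

theorem IsFrobenius.ncard_Iic_add_ncard_pairedGaps (hf : IsFrobenius S f) (hS : IsGNS S) :
    (Set.Iic f).ncard + (pairedGaps S f).ncard = 2 * genus S := by
  obtain ⟨-, hadd, hfin⟩ := hS
  have hgaps : Sᶜ ⊆ Set.Iic f := fun _ => hf.le_of_notMem hfin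
  have hL : pairedGaps S f ⊆ Sᶜ := fun _ h => h.1
  have hbox := Set.ncard_sdiff_add_ncard_of_subset hgaps (Set.finite_Iic f)
  rw [Set.sdiff_compl, Set.inter_comm] at hbox
  have hdual : (S ∩ Set.Iic f).ncard = (Sᶜ \ pairedGaps S f).ncard := by
    rw [← hf.image_sub_eq_diff_pairedGaps hfin hadd, Set.InjOn.ncard_image]
    intro x hx y hy (hxy : f - x = f - y)
    rw [← tsub_tsub_cancel_of_le (Set.mem_Iic.1 hx.2), hxy, tsub_tsub_cancel_of_le hy.2]
  have hsplit := Set.ncard_sdiff_add_ncard_of_subset hL hfin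
  unfold genus
  omega

end Frobenius

theorem statement4_general (d : ℕ) (S : Set (Fin d → ℕ)) (hS : IsGNS S)
    (f : Fin d → ℕ) (hf : IsFrobenius S f) :
    AlmostSymmetric S ↔
      {h : Fin d → ℕ | h ∉ S ∧ ∃ h', h' ∉ S ∧ h + h' = f} ⊆ PF S := by
  change AlmostSymmetric S ↔ pairedGaps S f ⊆ PF S
  have hfin := hS.2.2
  have hcount := hf.ncard_Iic_add_ncard_pairedGaps hS
  have hPFL := hf.PF_diff_singleton_subset_pairedGaps hfin
  have htyp : (PF S \ {f}).ncard + 1 = typ S :=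
    Set.ncard_sdiff_singleton_add_one (hf.mem_PF hfin) (hfin.subset fun _ h => h.1)
  unfold AlmostSymmetric genus at *
  constructor
  · rintro ⟨h, hhS, heq⟩
    have hbox : ∏ i, (h i + 1) ≤ (Set.Iic f).ncard := by
      rw [← ncard_Iic_pi]
      exact Set.ncard_le_ncard (Set.Iic_subset_Iic.2 (hf.le_of_notMem hfin hhS))
        (Set.finite_Iic f)
    have hL : PF S \ {f} = pairedGaps S f :=
      Set.eq_of_subset_of_ncard_le hPFL (by omega) (hfin.subset fun _ h => h.1)
    exact hL ▸ Set.sdiff_subset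
  · intro hsub
    have hL : pairedGaps S f = PF S \ {f} :=
      hPFL.antisymm' fun x hx => ⟨hsub hx, fun hxf => self_notMem_pairedGaps hS.1 (hxf ▸ hx)⟩
    refine ⟨f, hf.notMem, ?_⟩
    rw [← ncard_Iic_pi, ← hcount, hL, ← htyp]
    omega

/-- A Frobenius GNS `(S, f)` is almost symmetric iff `L(S) ⊆ PF(S)`. -/
theorem statement4 (d : ℕ) (hd : 0 < d) (S : Set (Fin d → ℕ)) (hS : IsGNS S)
    (f : Fin d → ℕ) (hf : IsFrobenius S f) :
    AlmostSymmetric S ↔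
      {h : Fin d → ℕ | h ∉ S ∧ ∃ h', h' ∉ S ∧ h + h' = f} ⊆ PF S :=
  statement4_general d S hS f hf
end

section
/- Let (S, f) be a Frobenius GNS in ℕ_0^d, regarded as a subset of ℤ^d via the natural embedding ℕ_0^d ⊆ ℤ^d, and set Z_S = {x ∈ ℤ^d : x ≤ f componentwise} ∪ ℕ_0^d. Then S is almost symmetric if and only if for every h ∈ Z_S ∖ S, either f − h ∈ S or f − h ∈ PF(S). -/
/-!
The reflection `h ↦ f - h` is an involution of the box `Iic f`, which contains every gap, and it
carries `S ∩ Iic f` onto the gaps whose reflection lies in `S`. Counting the box therefore gives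
`2 g(S) = ∏ (f i + 1) + |D|`, where `D = dualGaps S f` is the set of gaps whose reflection is
again a gap.
Since `f ∈ PF(S)` and every other pseudo-Frobenius element lies in `D`, we get
`2 g(S) + 1 - t(S) ≥ ∏ (f i + 1) ≥ ∏ (h i + 1)` for every gap `h`, with equality throughout exactly
when `D = PF(S) ∖ {f}`, i.e. when the reflection of every gap lies in `S` or in `PF(S)`.
A point of `Z_S` with a negative coordinate reflects to a point of `ℕ^d` outside the box, hence
into `S`.
-/

open Set

theorem ncard_Iic_pi_s6 {ι : Type*} [Fintype ι] [DecidableEq ι] (f : ι → ℕ) :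
    (Iic f).ncard = ∏ i, (f i + 1) := by
  rw [← Finset.coe_Iic, ncard_coe_finset, Pi.card_Iic]
  simp only [Nat.card_Iic]

theorem natCast_comp_tsub {ι : Type*} {f n : ι → ℕ} (hle : n ≤ f) :
    (fun i => ((f - n) i : ℤ)) = fun i => (f i : ℤ) - n i :=
  funext fun i => Nat.cast_sub (hle i)

variable {d : ℕ} {S : Set (Fin d → ℕ)} {f : Fin d → ℕ}

namespace IsFrobenius

theorem notMem_s6 (hf : IsFrobenius S f) : f ∉ S :=
  ((Set.ext_iff.mp hf f).mpr rfl).1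

theorem le_of_notMem_s6 (hf : IsFrobenius S f) (hfin : Sᶜ.Finite) {h : Fin d → ℕ} (hh : h ∉ S) :
    h ≤ f := by
  obtain ⟨m, hhm, hm, hmax⟩ := hfin.exists_le_maximal hh
  have hmf : m ∈ Maximals (· ≤ ·) Sᶜ := ⟨hm, fun y hy hmy => le_antisymm hmy (hmax hy hmy)⟩
  rw [hf] at hmf
  exact hmf ▸ hhm

theorem mem_PF_s6 (hf : IsFrobenius S f) (hfin : Sᶜ.Finite) : f ∈ PF S := by
  refine ⟨hf.notMem_s6, fun s _ hs0 => by_contra fun hfs => hs0 ?_⟩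
  exact nonpos_iff_eq_zero.mp ((add_le_iff_nonpos_right f).mp (hf.le_of_notMem_s6 hfin hfs))

theorem exists_mem_eq_sub_of_not_nonneg (hf : IsFrobenius S f) (hfin : Sᶜ.Finite)
    {h : Fin d → ℤ} (hle : ∀ i, h i ≤ f i) (hneg : ¬ ∀ i, 0 ≤ h i) :
    ∃ s ∈ S, (fun i => (s i : ℤ)) = fun i => (f i : ℤ) - h i := by
  set s : Fin d → ℕ := fun i => ((f i : ℤ) - h i).toNat
  have hs : (fun i => (s i : ℤ)) = fun i => (f i : ℤ) - h i :=
    funext fun i => Int.toNat_of_nonneg (sub_nonneg.mpr (hle i))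
  refine ⟨s, by_contra fun hsS => hneg fun i => ?_, hs⟩
  have hsi := congrFun hs i
  have hsf : s i ≤ f i := hf.le_of_notMem_s6 hfin hsS i
  omega

end IsFrobenius

def dualGaps (S : Set (Fin d → ℕ)) (f : Fin d → ℕ) : Set (Fin d → ℕ) :=
  {h | h ∉ S ∧ f - h ∉ S}

theorem ncard_gaps_tsub_mem (hS : IsGNS S) (hf : IsFrobenius S f) :
    {h | h ∉ S ∧ f - h ∈ S}.ncard = (S ∩ Iic f).ncard := by
  have himage : {h | h ∉ S ∧ f - h ∈ S} = (f - ·) '' (S ∩ Iic f) := by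
    ext h
    constructor
    · rintro ⟨hh, hfh⟩
      exact ⟨f - h, ⟨hfh, mem_Iic.mpr tsub_le_self⟩, tsub_tsub_cancel_of_le (hf.le_of_notMem_s6 hS.2.2 hh)⟩
    · rintro ⟨s, ⟨hs, hsf : s ≤ f⟩, rfl⟩
      refine ⟨fun hfs => hf.notMem_s6 ?_, by rwa [tsub_tsub_cancel_of_le hsf]⟩
      simpa [add_tsub_cancel_of_le hsf] using hS.2.1 _ _ hs hfs
  refine himage ▸ InjOn.ncard_image fun a ha b hb hab => ?_
  rw [← tsub_tsub_cancel_of_le (mem_Iic.mp ha.2), ← tsub_tsub_cancel_of_le (mem_Iic.mp hb.2)]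
  exact congrArg (f - ·) hab

theorem two_mul_genus (hS : IsGNS S) (hf : IsFrobenius S f) :
    2 * genus S = (dualGaps S f).ncard + ∏ i, (f i + 1) := by
  have hbox : (Iic f ∩ S).ncard + genus S = ∏ i, (f i + 1) := by
    have hdiff : Iic f \ S = Sᶜ := sdiff_eq_compl_inter.trans <|
      inter_eq_left.mpr fun h hh => hf.le_of_notMem_s6 hS.2.2 hh
    rw [genus, ← hdiff, ncard_inter_add_ncard_sdiff_eq_ncard _ _ (finite_Iic f), ncard_Iic_pi_s6]
  have hgaps : {h | h ∉ S ∧ f - h ∈ S}.ncard + (dualGaps S f).ncard = genus S :=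
    ncard_inter_add_ncard_sdiff_eq_ncard Sᶜ {h | f - h ∈ S} hS.2.2
  rw [ncard_gaps_tsub_mem hS hf, inter_comm] at hgaps
  omega

theorem PF_diff_singleton_subset_dualGaps (hS : IsGNS S) (hf : IsFrobenius S f) :
    PF S \ {f} ⊆ dualGaps S f := by
  rintro p ⟨⟨hp, hpS⟩, hpf⟩
  refine ⟨hp, fun hfp => hf.notMem_s6 ?_⟩
  have hle := hf.le_of_notMem_s6 hS.2.2 hp
  have hne : f - p ≠ 0 := fun h0 => hpf (le_antisymm hle (tsub_eq_zero_iff_le.mp h0))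
  simpa [add_tsub_cancel_of_le hle] using hpS _ hfp hne

theorem almostSymmetric_iff_dualGaps_eq (hS : IsGNS S) (hf : IsFrobenius S f) :
    AlmostSymmetric S ↔ dualGaps S f = PF S \ {f} := by
  have hfin : (dualGaps S f).Finite := hS.2.2.subset fun _ h => h.1
  have hsub := PF_diff_singleton_subset_dualGaps hS hf
  have hcard := ncard_le_ncard hsub hfin
  have htyp : typ S = (PF S \ {f}).ncard + 1 :=
    (ncard_sdiff_singleton_add_one (hf.mem_PF_s6 hS.2.2) (hS.2.2.subset fun _ h => h.1)).symm
  have hgenus := two_mul_genus hS hf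
  constructor
  · rintro ⟨h, hh, heq⟩
    have hprod : ∏ i, (h i + 1) ≤ ∏ i, (f i + 1) := by
      gcongr with i
      exact hf.le_of_notMem_s6 hS.2.2 hh i
    exact (eq_of_subset_of_ncard_le hsub (by omega) hfin).symm
  · intro hD
    refine ⟨f, hf.notMem_s6, ?_⟩
    rw [htyp, ← hD]
    omega

theorem dualGaps_eq_iff (hS : IsGNS S) (hf : IsFrobenius S f) :
    dualGaps S f = PF S \ {f} ↔ ∀ h ∉ S, f - h ∈ S ∨ f - h ∈ PF S := by
  have hrefl : ∀ {h}, h ∉ S → f - (f - h) = h :=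
    fun hh => tsub_tsub_cancel_of_le (hf.le_of_notMem_s6 hS.2.2 hh)
  constructor
  · intro hD h hh
    refine or_iff_not_imp_left.mpr fun hfh => ?_
    have hdual : f - h ∈ dualGaps S f := ⟨hfh, by rwa [hrefl hh]⟩
    exact (hD ▸ hdual).1
  · intro H
    refine Subset.antisymm (fun h ⟨hh, hfh⟩ => ⟨?_, ?_⟩) (PF_diff_singleton_subset_dualGaps hS hf)
    · simpa [hrefl hh, hh] using H _ hfh
    · rintro rfl
      exact hfh (by simpa using hS.1)

theorem almostSymmetric_iff_forall_notMem (hS : IsGNS S) (hf : IsFrobenius S f) :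
    AlmostSymmetric S ↔ ∀ h ∉ S, f - h ∈ S ∨ f - h ∈ PF S :=
  (almostSymmetric_iff_dualGaps_eq hS hf).trans (dualGaps_eq_iff hS hf)

theorem statement6_general (d : ℕ) (S : Set (Fin d → ℕ)) (hS : IsGNS S)
    (f : Fin d → ℕ) (hf : IsFrobenius S f) :
    AlmostSymmetric S ↔
      ∀ h : Fin d → ℤ,
        ((∀ i, h i ≤ (f i : ℤ)) ∨ (∀ i, 0 ≤ h i)) →
        (¬ ∃ s ∈ S, (fun i => (s i : ℤ)) = h) →
        ((∃ s ∈ S, (fun i => (s i : ℤ)) = fun i => (f i : ℤ) - h i) ∨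
         (∃ p ∈ PF S, (fun i => (p i : ℤ)) = fun i => (f i : ℤ) - h i)) := by
  have hcast : Function.Injective fun (s : Fin d → ℕ) i => (s i : ℤ) :=
    Nat.cast_injective.comp_left
  rw [almostSymmetric_iff_forall_notMem hS hf]
  constructor
  · intro H h hZ hhS
    by_cases hpos : ∀ i, 0 ≤ h i
    · lift h to Fin d → ℕ using hpos
      have hh : h ∉ S := fun hs => hhS ⟨h, hs, rfl⟩
      rw [← natCast_comp_tsub (hf.le_of_notMem_s6 hS.2.2 hh)]
      exact (H h hh).imp (fun hs => ⟨_, hs, rfl⟩) fun hp => ⟨_, hp, rfl⟩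
    · exact Or.inl (hf.exists_mem_eq_sub_of_not_nonneg hS.2.2 (hZ.resolve_right hpos) hpos)
  · intro H h hh
    have hZ := H (fun i => h i) (Or.inr fun i => Int.natCast_nonneg _)
      fun ⟨s, hs, e⟩ => hh (hcast e ▸ hs)
    rw [← natCast_comp_tsub (hf.le_of_notMem_s6 hS.2.2 hh)] at hZ
    exact hZ.imp (fun ⟨s, hs, e⟩ => hcast e ▸ hs) fun ⟨p, hp, e⟩ => hcast e ▸ hp

/-- A Frobenius GNS `(S, f)` is almost symmetric iff for every
`h ∈ Z_S ∖ S` (in `ℤ^d`), either `f - h ∈ S` or `f - h ∈ PF(S)`. -/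
theorem statement6 (d : ℕ) (hd : 0 < d) (S : Set (Fin d → ℕ)) (hS : IsGNS S)
    (f : Fin d → ℕ) (hf : IsFrobenius S f) :
    AlmostSymmetric S ↔
      ∀ h : Fin d → ℤ,
        ((∀ i, h i ≤ (f i : ℤ)) ∨ (∀ i, 0 ≤ h i)) →
        (¬ ∃ s ∈ S, (fun i => (s i : ℤ)) = h) →
        ((∃ s ∈ S, (fun i => (s i : ℤ)) = fun i => (f i : ℤ) - h i) ∨
         (∃ p ∈ PF S, (fun i => (p i : ℤ)) = fun i => (f i : ℤ) - h i)) :=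
  statement6_general d S hS f hf
end

section
/- Let S ⊆ ℕ_0^d be a generalized numerical semigroup. Then S is pseudo-symmetric if and only if S is almost symmetric and t(S) = 2. -/
open scoped BigOperators

/-!
Reflecting the box `[0, h]` through `x ↦ h - x` sends the elements of `S` below a gap `h` injectively
onto gaps, and misses exactly the "mirror gaps" `x` with `h - x` also a gap. Counting gives
`2 g(S) + 1 = |mirror gaps| + 2 |gaps not below h| + 1 + |h + 1|_×`, so `S` is almost symmetric at `h`
iff `t(S) = |mirror gaps| + 2 |gaps not below h| + 1`. For `t(S) = 2` this forces every gap to lie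
below `h` and a single mirror gap `q`, which is then `h / 2`; conversely `PF S = {f, f / 2}` makes
`f` the largest gap and `f / 2` its only mirror gap.
-/

def mirrorGaps {d : ℕ} (S : Set (Fin d → ℕ)) (h : Fin d → ℕ) : Set (Fin d → ℕ) :=
  {x | x ∉ S ∧ x ≤ h ∧ h - x ∉ S}

variable {d : ℕ} {S : Set (Fin d → ℕ)} {h q x : Fin d → ℕ}

theorem ncard_Iic_eq_prod (h : Fin d → ℕ) : (Set.Iic h).ncard = ∏ i, (h i + 1) := by
  have hpi : Set.Iic h = Set.univ.pi (fun i => Set.Iic (h i)) := by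
    ext x; simp [Pi.le_def]
  rw [hpi, ← Nat.card_coe_set_eq, Nat.card_congr (Equiv.Set.univPi _), Nat.card_pi]
  congr 1; ext i
  rw [Nat.card_coe_set_eq, Set.ncard_eq_toFinset_card', Set.toFinset_Iic, Nat.card_Iic]

theorem tsub_mem_mirrorGaps (hx : x ∈ mirrorGaps S h) : h - x ∈ mirrorGaps S h := by
  obtain ⟨hxS, hxh, hhxS⟩ := hx
  exact ⟨hhxS, tsub_le_self, by rwa [tsub_tsub_cancel_of_le hxh]⟩

theorem add_self_eq_of_mirrorGaps_eq_singleton (hq : mirrorGaps S h = {q}) : q + q = h := by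
  have hqh : q ≤ h := (hq ▸ Set.mem_singleton q : q ∈ mirrorGaps S h).2.1
  have hhq : h - q = q := by
    simpa [hq] using tsub_mem_mirrorGaps (hq ▸ Set.mem_singleton q : q ∈ mirrorGaps S h)
  calc q + q = q + (h - q) := by rw [hhq]
    _ = h := add_tsub_cancel_of_le hqh

theorem mem_PF_of_compl_subset_Iic (hh : h ∉ S) (hgaps : Sᶜ ⊆ Set.Iic h) : h ∈ PF S := by
  refine ⟨hh, fun s _ hs0 => ?_⟩
  by_contra hhs
  exact hs0 (add_eq_left.mp (le_antisymm (hgaps hhs) le_self_add))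

namespace IsGNS

theorem PF_finite (hS : IsGNS S) : (PF S).Finite :=
  hS.2.2.subset fun _ hp => hp.1

/-- A `≤_S`-maximal gap above `x` exists because there are finitely many gaps. -/
theorem exists_mem_PF_add_eq (hS : IsGNS S) (hx : x ∉ S) : ∃ p ∈ PF S, ∃ s ∈ S, x + s = p := by
  obtain ⟨h0, hadd, hfin⟩ := hS
  set T := {y | y ∉ S ∧ ∃ s ∈ S, x + s = y}
  obtain ⟨m, ⟨hmS, s, hs, hxs⟩, hmax⟩ :=
    (hfin.subset fun y (hy : y ∈ T) => hy.1).exists_maximal ⟨x, hx, 0, h0, add_zero x⟩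
  refine ⟨m, ⟨hmS, fun s' hs' hs'0 => ?_⟩, s, hs, hxs⟩
  by_contra hms
  have hmT : m + s' ∈ T := ⟨hms, s + s', hadd _ _ hs hs', by rw [← add_assoc, hxs]⟩
  exact hs'0 (add_eq_left.mp (le_antisymm (hmax hmT le_self_add) le_self_add))

theorem compl_subset_Iic_of_forall_PF_le (hS : IsGNS S) (hf : ∀ p ∈ PF S, p ≤ h) :
    Sᶜ ⊆ Set.Iic h := by
  intro x hx
  obtain ⟨p, hp, s, -, rfl⟩ := hS.exists_mem_PF_add_eq hx
  exact le_self_add.trans (hf _ hp)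

theorem ncard_inter_Iic_add_ncard_mirrorGaps (hS : IsGNS S) (hh : h ∉ S) :
    (S ∩ Set.Iic h).ncard + (mirrorGaps S h).ncard = (Sᶜ ∩ Set.Iic h).ncard := by
  have hreflect : (h - ·) '' (S ∩ Set.Iic h) = (Sᶜ ∩ Set.Iic h) \ mirrorGaps S h := by
    ext y
    constructor
    · rintro ⟨x, ⟨hxS, hxh : x ≤ h⟩, rfl⟩
      have hhx : h - x ∉ S := fun hhx =>
        hh (add_tsub_cancel_of_le hxh ▸ hS.2.1 _ _ hxS hhx)
      exact ⟨⟨hhx, Set.mem_Iic.mpr tsub_le_self⟩,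
        fun hm => hm.2.2 (by rwa [tsub_tsub_cancel_of_le hxh])⟩
    · rintro ⟨⟨hyS, hyh : y ≤ h⟩, hym⟩
      have hhy : h - y ∈ S := not_not.mp fun hhy => hym ⟨hyS, hyh, hhy⟩
      exact ⟨h - y, ⟨hhy, Set.mem_Iic.mpr tsub_le_self⟩, tsub_tsub_cancel_of_le hyh⟩
  have hinj : Set.InjOn (h - ·) (S ∩ Set.Iic h) := fun x hx y hy hxy => by
    simpa [tsub_tsub_cancel_of_le (Set.mem_Iic.mp hx.2),
      tsub_tsub_cancel_of_le (Set.mem_Iic.mp hy.2)] using congrArg (h - ·) hxy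
  rw [← hinj.ncard_image, hreflect]
  exact Set.ncard_sdiff_add_ncard_of_subset (fun x hx => ⟨hx.1, hx.2.1⟩) (hS.2.2.inter_of_left _)

theorem two_mul_genus_add_one (hS : IsGNS S) (hh : h ∉ S) :
    2 * genus S + 1 =
      (mirrorGaps S h).ncard + 2 * (Sᶜ \ Set.Iic h).ncard + 1 + ∏ i, (h i + 1) := by
  have hgenus : genus S = (Sᶜ ∩ Set.Iic h).ncard + (Sᶜ \ Set.Iic h).ncard :=
    (Set.ncard_inter_add_ncard_sdiff_eq_ncard _ _ hS.2.2).symm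
  have hbox : (Set.Iic h).ncard = (Sᶜ ∩ Set.Iic h).ncard + (S ∩ Set.Iic h).ncard := by
    rw [← Set.ncard_inter_add_ncard_sdiff_eq_ncard (Set.Iic h) Sᶜ (Set.finite_Iic h),
      Set.sdiff_compl, Set.inter_comm Sᶜ, Set.inter_comm S]
  have hreflect := hS.ncard_inter_Iic_add_ncard_mirrorGaps hh
  rw [← ncard_Iic_eq_prod]
  omega

theorem almostSymmetric_at_iff (hS : IsGNS S) (hh : h ∉ S) :
    2 * genus S + 1 = typ S + ∏ i, (h i + 1) ↔
      typ S = (mirrorGaps S h).ncard + 2 * (Sᶜ \ Set.Iic h).ncard + 1 := by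
  rw [hS.two_mul_genus_add_one hh]
  omega

theorem mirrorGaps_eq_singleton_of_PF_eq_pair (hS : IsGNS S) (hqf : q + q = h)
    (hPF : PF S = {h, q}) : mirrorGaps S h = {q} := by
  have hqS : q ∉ S := (hPF.symm ▸ Set.mem_insert_of_mem h rfl : q ∈ PF S).1
  have hhq : h - q = q := by rw [← hqf, add_tsub_cancel_left]
  ext x
  refine ⟨fun ⟨hxS, hxh, hhxS⟩ => ?_, fun hx => ?_⟩
  · -- neither `x` nor `h - x` lies `≤_S`-below `h`, so both lie below `q`, and `2q = h` pins them
    have below_q : ∀ y ∉ S, h - y ∉ S → y ≤ h → ∃ s ∈ S, y + s = q := fun y hyS hhyS hyh => by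
      obtain ⟨p, hp, s, hs, hys⟩ := hS.exists_mem_PF_add_eq hyS
      rw [hPF] at hp
      rcases hp with rfl | rfl
      · rw [← hys, add_tsub_cancel_left] at hhyS
        exact absurd hs hhyS
      · exact ⟨s, hs, hys⟩
    obtain ⟨s, -, hxs⟩ := below_q x hxS hhxS hxh
    obtain ⟨s', -, hxs'⟩ := below_q (h - x) hhxS (by rwa [tsub_tsub_cancel_of_le hxh]) tsub_le_self
    have hsum : h + (s + s') = h + 0 :=
      calc h + (s + s') = x + (h - x) + (s + s') := by rw [add_tsub_cancel_of_le hxh]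
        _ = (x + s) + ((h - x) + s') := add_add_add_comm _ _ _ _
        _ = h + 0 := by rw [hxs, hxs', hqf, add_zero]
    have hs0 : s = 0 := (add_eq_zero.mp (add_left_cancel hsum)).1
    rw [Set.mem_singleton_iff, ← hxs, hs0, add_zero]
  · rw [Set.mem_singleton_iff.mp hx]
    exact ⟨hqS, hqf ▸ le_self_add, by rwa [hhq]⟩

theorem mem_PF_of_mirrorGaps_eq_singleton (hS : IsGNS S) (hgaps : Sᶜ ⊆ Set.Iic h)
    (hq : mirrorGaps S h = {q}) : q ∈ PF S := by
  have hqf := add_self_eq_of_mirrorGaps_eq_singleton hq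
  have hqS : q ∉ S := (hq ▸ Set.mem_singleton q : q ∈ mirrorGaps S h).1
  refine ⟨hqS, fun s hs hs0 => ?_⟩
  by_contra hqs
  have hqsh : q + s ≤ h := hgaps hqs
  have hsq : s ≤ q := le_of_add_le_add_left (hqf.symm ▸ hqsh)
  have hmirror : q + s ∈ mirrorGaps S h := by
    refine ⟨hqs, hqsh, fun hmem => hqS ?_⟩
    rw [← hqf, add_tsub_add_eq_tsub_left] at hmem
    exact tsub_add_cancel_of_le hsq ▸ hS.2.1 _ _ hmem hs
  rw [hq, Set.mem_singleton_iff] at hmirror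
  exact hs0 (left_eq_add.mp hmirror.symm)

end IsGNS

theorem statement9_general (d : ℕ) (S : Set (Fin d → ℕ)) (hS : IsGNS S) :
    PseudoSymmetric S ↔ AlmostSymmetric S ∧ typ S = 2 := by
  constructor
  · rintro ⟨f, q, hfq, hqf, hPF⟩
    have hfS : f ∉ S := (hPF.symm ▸ Set.mem_insert f _ : f ∈ PF S).1
    have htyp : typ S = 2 := by rw [typ, hPF, Set.ncard_pair hfq]
    have hgaps : Sᶜ ⊆ Set.Iic f := hS.compl_subset_Iic_of_forall_PF_le fun p hp => by
      rw [hPF] at hp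
      rcases hp with rfl | rfl
      exacts [le_rfl, hqf ▸ le_self_add]
    refine ⟨⟨f, hfS, (hS.almostSymmetric_at_iff hfS).mpr ?_⟩, htyp⟩
    rw [hS.mirrorGaps_eq_singleton_of_PF_eq_pair hqf hPF, Set.sdiff_eq_empty.mpr hgaps,
      Set.ncard_singleton, Set.ncard_empty, htyp]
  · rintro ⟨⟨h, hhS, hAS⟩, htyp⟩
    have hcount := (hS.almostSymmetric_at_iff hhS).mp hAS
    have hgaps : Sᶜ ⊆ Set.Iic h :=
      Set.sdiff_eq_empty.mp ((Set.ncard_eq_zero hS.2.2.sdiff).mp (by omega))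
    obtain ⟨q, hq⟩ := Set.ncard_eq_one.mp (by omega : (mirrorGaps S h).ncard = 1)
    have hqf := add_self_eq_of_mirrorGaps_eq_singleton hq
    have hqS : q ∉ S := (hq ▸ Set.mem_singleton q : q ∈ mirrorGaps S h).1
    have hhq : h ≠ q := fun hhq => hqS (add_eq_left.mp (hqf.trans hhq) ▸ hS.1)
    have hsub : ({h, q} : Set (Fin d → ℕ)) ⊆ PF S := Set.insert_subset_iff.mpr
      ⟨mem_PF_of_compl_subset_Iic hhS hgaps,
        Set.singleton_subset_iff.mpr (hS.mem_PF_of_mirrorGaps_eq_singleton hgaps hq)⟩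
    refine ⟨h, q, hhq, hqf, (Set.eq_of_subset_of_ncard_le hsub ?_ hS.PF_finite).symm⟩
    rw [Set.ncard_pair hhq, ← htyp, typ]

/-- A GNS is pseudo-symmetric iff it is almost symmetric of type 2. -/
theorem statement9 (d : ℕ) (hd : 0 < d) (S : Set (Fin d → ℕ)) (hS : IsGNS S) :
    PseudoSymmetric S ↔ AlmostSymmetric S ∧ typ S = 2 :=
  statement9_general d S hS
end
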